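/- Let L : ℝ^k × ℝⁿ × ℝ^{nk} → ℝ be smooth and hyperregular, meaning the Legendre transformation Leg(t, q, v) = (t, q, (∂L/∂v^i_A)(t,q,v)) is a bijection of ℝ^k × ℝⁿ × ℝ^{nk} onto itself and the nk×nk Hessian matrix (∂²L/∂v^i_A ∂v^j_B) is invertible at every point. Let E_L = v^i_A ∂L/∂v^i_A − L (sum over A, i) and H = E_L ∘ Leg⁻¹. For a smooth map φ : ℝ^k → ℝⁿ set φ^{(1)}(t) = (t, φ(t), ∂φ^i/∂t^A(t)) and ψ = Leg ∘ φ^{(1)}, writing ψ(t) = (t, φ(t), ψ^A_i(t)). Then φ satisfies the Euler–Lagrange field equations ∑_{A=1}^k ∂/∂t^A [ (∂L/∂v^i_A) ∘ φ^{(1)} ](t) = (∂L/∂q^i)(φ^{(1)}(t)) for all i and t, if and only if ψ satisfies the Hamilton field equations ∂φ^i/∂t^A = (∂H/∂p^A_i)(ψ(t)) and ∑_{A=1}^k ∂ψ^A_i/∂t^A = −(∂H/∂q^i)(ψ(t)) for all A, i and t. -/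

import Mathlib

/-!
STATEMENT 5: Equivalence of the Euler–Lagrange field equations and the Hamilton field
equations for a hyperregular Lagrangian on `ℝ^k × ℝⁿ × ℝ^{nk}`.
-/

open scoped BigOperators

/-- The phase space `ℝ^k × ℝⁿ × ℝ^{nk}`, points `(t^A, q^i, v^i_A)` resp. `(t^A, q^i, p^A_i)`. -/
abbrev Vkn (k n : ℕ) := (Fin k → ℝ) × (Fin n → ℝ) × (Fin n → Fin k → ℝ)

noncomputable section

/-- Basis vector in the `q^i` direction. -/
def eq' (k n : ℕ) (i : Fin n) : Vkn k n := (0, Pi.single i 1, 0)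

/-- Basis vector in the `v^i_A` (resp. `p^A_i`) direction. -/
def ev' (k n : ℕ) (i : Fin n) (A : Fin k) : Vkn k n := (0, 0, Pi.single i (Pi.single A 1))

/-- Second partial derivative: derivative in direction `v` of `y ↦ ∂f/∂w (y)`. -/
def pd2 (k n : ℕ) (f : Vkn k n → ℝ) (v w : Vkn k n) (x : Vkn k n) : ℝ :=
  fderiv ℝ (fun y => fderiv ℝ f y w) x v

/-- The Legendre transformation `Leg(t, q, v) = (t, q, ∂L/∂v^i_A (t,q,v))`. -/
def Leg (k n : ℕ) (L : Vkn k n → ℝ) (x : Vkn k n) : Vkn k n :=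
  (x.1, x.2.1, fun i A => fderiv ℝ L x (ev' k n i A))

/-- The energy `E_L = v^i_A ∂L/∂v^i_A − L`. -/
def energy (k n : ℕ) (L : Vkn k n → ℝ) (y : Vkn k n) : ℝ :=
  (∑ A, ∑ i, y.2.2 i A * fderiv ℝ L y (ev' k n i A)) - L y

/-- The first prolongation `φ^{(1)}(t) = (t, φ(t), ∂φ^i/∂t^A (t))` of a field `φ : ℝ^k → ℝⁿ`. -/
def prol (k n : ℕ) (φ : (Fin k → ℝ) → (Fin n → ℝ)) (s : Fin k → ℝ) : Vkn k n :=
  (s, φ s, fun i A => fderiv ℝ (fun r => φ r i) s (Pi.single A 1))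

end

noncomputable section Aux
variable {k n : ℕ} {L : Vkn k n → ℝ}

def legDeriv (k n : ℕ) (D : Vkn k n →L[ℝ] (Vkn k n →L[ℝ] ℝ)) : Vkn k n →L[ℝ] Vkn k n :=
  (ContinuousLinearMap.fst ℝ _ _).prod
    (((ContinuousLinearMap.fst ℝ _ _).comp (ContinuousLinearMap.snd ℝ _ _)).prod
      (ContinuousLinearMap.pi fun i => ContinuousLinearMap.pi fun A =>
        (ContinuousLinearMap.apply ℝ ℝ (ev' k n i A)).comp D))

lemma legDeriv_apply (D : Vkn k n →L[ℝ] (Vkn k n →L[ℝ] ℝ)) (w : Vkn k n) :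
    legDeriv k n D w = (w.1, w.2.1, fun i A => D w (ev' k n i A)) := rfl

lemma contDiff_fderivL (hL : ContDiff ℝ (⊤ : ℕ∞) L) : ContDiff ℝ (⊤ : ℕ∞) (fderiv ℝ L) :=
  hL.fderiv_right (by exact_mod_cast le_rfl)

lemma hasFDerivAt_fderiv_apply (hL : ContDiff ℝ (⊤ : ℕ∞) L) (x w : Vkn k n) :
    HasFDerivAt (fun y => fderiv ℝ L y w)
      ((ContinuousLinearMap.apply ℝ ℝ w).comp (fderiv ℝ (fderiv ℝ L) x)) x :=
  (ContinuousLinearMap.apply ℝ ℝ w).hasFDerivAt.comp x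
    (((contDiff_fderivL hL).differentiable (by simp) x).hasFDerivAt)

lemma contDiff_Leg (hL : ContDiff ℝ (⊤ : ℕ∞) L) : ContDiff ℝ (⊤ : ℕ∞) (Leg k n L) := by
  refine contDiff_fst.prodMk ((contDiff_fst.comp contDiff_snd).prodMk
    (contDiff_pi.2 fun i => contDiff_pi.2 fun A => ?_))
  exact (ContinuousLinearMap.apply ℝ ℝ (ev' k n i A)).contDiff.comp (contDiff_fderivL hL)

lemma hasFDerivAt_Leg (hL : ContDiff ℝ (⊤ : ℕ∞) L) (x : Vkn k n) :
    HasFDerivAt (Leg k n L) (legDeriv k n (fderiv ℝ (fderiv ℝ L) x)) x := by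
  apply HasFDerivAt.prodMk
  case hf₁ => exact hasFDerivAt_fst
  apply HasFDerivAt.prodMk
  case hf₁ => exact ((ContinuousLinearMap.fst ℝ (Fin n → ℝ) (Fin n → Fin k → ℝ)).comp
      (ContinuousLinearMap.snd ℝ (Fin k → ℝ) _)).hasFDerivAt
  rw [hasFDerivAt_pi']; intro i
  rw [hasFDerivAt_pi']; intro A
  exact hasFDerivAt_fderiv_apply hL x (ev' k n i A)

def projv (k n : ℕ) (i : Fin n) (A : Fin k) : Vkn k n →L[ℝ] ℝ :=
  (ContinuousLinearMap.proj (R := ℝ) (φ := fun _ : Fin k => ℝ) A).comp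
    ((ContinuousLinearMap.proj (R := ℝ) (φ := fun _ : Fin n => Fin k → ℝ) i).comp
      ((ContinuousLinearMap.snd ℝ (Fin n → ℝ) (Fin n → Fin k → ℝ)).comp
        (ContinuousLinearMap.snd ℝ (Fin k → ℝ) ((Fin n → ℝ) × (Fin n → Fin k → ℝ)))))

lemma projv_apply (i : Fin n) (A : Fin k) (w : Vkn k n) : projv k n i A w = w.2.2 i A := rfl

def enDeriv (k n : ℕ) (L : Vkn k n → ℝ) (x : Vkn k n)
    (D : Vkn k n →L[ℝ] (Vkn k n →L[ℝ] ℝ)) : Vkn k n →L[ℝ] ℝ :=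
  (∑ A, ∑ i, (x.2.2 i A • ((ContinuousLinearMap.apply ℝ ℝ (ev' k n i A)).comp D)
      + (fderiv ℝ L x (ev' k n i A)) • projv k n i A)) - fderiv ℝ L x

lemma hasFDerivAt_energy (hL : ContDiff ℝ (⊤ : ℕ∞) L) (x : Vkn k n) :
    HasFDerivAt (energy k n L) (enDeriv k n L x (fderiv ℝ (fderiv ℝ L) x)) x := by
  unfold energy enDeriv
  refine HasFDerivAt.sub ?_ ((hL.differentiable (by simp) x).hasFDerivAt)
  refine HasFDerivAt.fun_sum fun A _ => HasFDerivAt.fun_sum fun i _ => ?_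
  exact (projv k n i A).hasFDerivAt.mul (hasFDerivAt_fderiv_apply hL x (ev' k n i A))

lemma enDeriv_apply (x : Vkn k n) (D : Vkn k n →L[ℝ] (Vkn k n →L[ℝ] ℝ)) (w : Vkn k n) :
    enDeriv k n L x D w
      = (∑ A, ∑ i, (x.2.2 i A * D w (ev' k n i A)
          + fderiv ℝ L x (ev' k n i A) * w.2.2 i A)) - fderiv ℝ L x w := by
  simp [enDeriv, ContinuousLinearMap.sum_apply, projv_apply]

lemma decomp_v (m : Fin n → Fin k → ℝ) :
    ((0, 0, m) : Vkn k n) = ∑ i, ∑ A, m i A • ev' k n i A := by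
  refine Prod.ext ?_ (Prod.ext ?_ ?_)
  · simp [ev', Prod.fst_sum, Prod.snd_sum, Prod.smul_mk]
  · simp [ev', Prod.fst_sum, Prod.snd_sum, Prod.smul_mk]
  · simp only [ev', Prod.fst_sum, Prod.snd_sum, Prod.smul_mk, smul_zero]
    funext j B
    simp [Finset.sum_apply, Pi.single_apply, ite_apply, Finset.sum_ite_eq,
      Finset.sum_ite_eq', mul_ite]

lemma legDeriv_injective (D : Vkn k n →L[ℝ] (Vkn k n →L[ℝ] ℝ))
    (hunit : IsUnit (Matrix.of fun p q : Fin n × Fin k =>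
      D (ev' k n p.1 p.2) (ev' k n q.1 q.2))) :
    Function.Injective (legDeriv k n D) := by
  set M : Matrix (Fin n × Fin k) (Fin n × Fin k) ℝ :=
    Matrix.of fun p q => D (ev' k n p.1 p.2) (ev' k n q.1 q.2) with hM
  intro a b hab
  have h : legDeriv k n D (a - b) = 0 := by rw [map_sub, hab, sub_self]
  set w := a - b with hw
  suffices hz : w = 0 by
    have := sub_eq_zero.mp hz; exact this
  rw [legDeriv_apply] at h
  have h1 : w.1 = 0 := congrArg Prod.fst h
  have h2 : w.2.1 = 0 := congrArg (fun z => z.2.1) h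
  have h3 : ∀ i A, D w (ev' k n i A) = 0 := by
    intro i A
    have := congrArg (fun z => z.2.2 i A) h
    simpa using this
  have hwdec : w = ((0, 0, w.2.2) : Vkn k n) := by
    refine Prod.ext h1 (Prod.ext h2 rfl)
  set u : Fin n × Fin k → ℝ := fun p => w.2.2 p.1 p.2 with hu
  have hMu : Matrix.vecMul u M = 0 := by
    funext q
    have : D w (ev' k n q.1 q.2) = 0 := h3 q.1 q.2
    rw [hwdec, decomp_v] at this
    simp only [map_sum, map_smul, ContinuousLinearMap.coe_sum', Finset.sum_apply,
      ContinuousLinearMap.coe_smul', Pi.smul_apply, smul_eq_mul] at this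
    simp only [Matrix.vecMul, dotProduct, Pi.zero_apply]
    rw [Fintype.sum_prod_type]
    simpa [hM, hu] using this
  have hu0 : u = 0 := by
    have hdet : IsUnit M.det := (Matrix.isUnit_iff_isUnit_det M).mp hunit
    have := congrArg (fun v => Matrix.vecMul v M⁻¹) hMu
    simpa [Matrix.vecMul_vecMul, Matrix.mul_nonsing_inv M hdet, Matrix.zero_vecMul] using this
  have h4 : w.2.2 = 0 := by
    funext j B; exact congrFun hu0 (j, B)
  rw [hwdec, h4]
  rfl
end Aux

noncomputable section Key
variable {k n : ℕ} {L : Vkn k n → ℝ}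

lemma key_lemma (hL : ContDiff ℝ (⊤ : ℕ∞) L) (hbij : Function.Bijective (Leg k n L))
    (hreg : ∀ x : Vkn k n, IsUnit (Matrix.of fun p q : Fin n × Fin k =>
      pd2 k n L (ev' k n p.1 p.2) (ev' k n q.1 q.2) x))
    (H : Vkn k n → ℝ)
    (hHdef : ∀ p : Vkn k n, H p = energy k n L (Function.invFun (Leg k n L) p))
    (x : Vkn k n) :
    (∀ i A, fderiv ℝ H (Leg k n L x) (ev' k n i A) = x.2.2 i A) ∧
    (∀ i, fderiv ℝ H (Leg k n L x) (eq' k n i) = - fderiv ℝ L x (eq' k n i)) := by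
  set D := fderiv ℝ (fderiv ℝ L) x with hDdef
  have hpd2 : ∀ v w : Vkn k n, pd2 k n L v w x = D v w := by
    intro v w
    rw [pd2, (hasFDerivAt_fderiv_apply hL x w).fderiv]; rfl
  set M : Matrix (Fin n × Fin k) (Fin n × Fin k) ℝ :=
    Matrix.of (fun p q : Fin n × Fin k => D (ev' k n p.1 p.2) (ev' k n q.1 q.2)) with hMdef
  have hMunit : IsUnit M := by
    have : M = Matrix.of fun p q : Fin n × Fin k =>
        pd2 k n L (ev' k n p.1 p.2) (ev' k n q.1 q.2) x := by
      funext p q; simp [hMdef, hpd2]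
    rw [this]; exact hreg x
  set ℓ := legDeriv k n D with hldef
  have hinj : Function.Injective ℓ := legDeriv_injective D hMunit
  have hbij' : Function.Bijective ℓ.toLinearMap :=
    ⟨hinj, LinearMap.injective_iff_surjective.mp hinj⟩
  set e : Vkn k n ≃L[ℝ] Vkn k n :=
    LinearEquiv.toContinuousLinearEquiv (LinearEquiv.ofBijective ℓ.toLinearMap hbij') with hedef
  have hecoe : ∀ w, e w = ℓ w := fun _ => rfl
  have hstrict : HasStrictFDerivAt (Leg k n L) (e : Vkn k n →L[ℝ] Vkn k n) x := by
    have h1 := ((contDiff_Leg hL).contDiffAt (x := x)).hasStrictFDerivAt (by simp)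
    have h2 : fderiv ℝ (Leg k n L) x = ℓ := (hasFDerivAt_Leg hL x).fderiv
    have h3 : (e : Vkn k n →L[ℝ] Vkn k n) = ℓ := ContinuousLinearMap.ext fun w => hecoe w
    rwa [h2, ← h3] at h1
  set g := hstrict.localInverse (Leg k n L) e x with hgdef
  have hg : HasStrictFDerivAt g (e.symm : Vkn k n →L[ℝ] Vkn k n) (Leg k n L x) :=
    hstrict.to_localInverse
  have hev : Function.invFun (Leg k n L) =ᶠ[nhds (Leg k n L x)] g :=
    hstrict.eventually_right_inverse.mono (fun y hy => hbij.injective (by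
      rw [Function.invFun_eq (hbij.surjective y), hy]))
  have hinvd : HasFDerivAt (Function.invFun (Leg k n L)) (e.symm : Vkn k n →L[ℝ] Vkn k n)
      (Leg k n L x) := (hev.hasFDerivAt_iff).mpr hg.hasFDerivAt
  have hxx : Function.invFun (Leg k n L) (Leg k n L x) = x :=
    Function.leftInverse_invFun hbij.injective x
  have hH : HasFDerivAt H ((enDeriv k n L x D).comp (e.symm : Vkn k n →L[ℝ] Vkn k n))
      (Leg k n L x) := by
    have hfun : H = energy k n L ∘ Function.invFun (Leg k n L) := funext hHdef
    rw [hfun]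
    have hcomp := (hasFDerivAt_energy hL
      (Function.invFun (Leg k n L) (Leg k n L x))).comp (Leg k n L x) hinvd
    rw [hxx] at hcomp
    exact hcomp
  set F := fderiv ℝ H (Leg k n L x) with hFdef
  have master : ∀ w, F (ℓ w) = enDeriv k n L x D w := by
    intro w
    rw [hFdef, hH.fderiv]
    show enDeriv k n L x D (e.symm (ℓ w)) = _
    rw [show ℓ w = e w from (hecoe w).symm, e.symm_apply_apply]
  -- first Hamilton relation
  have hFsum : ∀ m : Fin n → Fin k → ℝ,
      F ((0, 0, m) : Vkn k n) = ∑ i, ∑ A, m i A * F (ev' k n i A) := by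
    intro m
    rw [decomp_v]
    simp [map_sum, map_smul, smul_eq_mul]
  have hlv : ∀ (j : Fin n) (B : Fin k),
      ℓ (ev' k n j B) = ((0, 0, fun i A => D (ev' k n j B) (ev' k n i A)) : Vkn k n) := by
    intro j B; rw [legDeriv_apply]; rfl
  have hsingle : ∀ (j : Fin n) (B : Fin k) (f : Fin n → Fin k → ℝ),
      (∑ A, ∑ i, f i A * (Pi.single j (Pi.single B (1:ℝ)) : Fin n → Fin k → ℝ) i A) = f j B := by
    intro j B f
    rw [Finset.sum_comm]
    simp [Pi.single_apply, ite_apply, mul_ite, Finset.sum_ite_eq, Finset.sum_ite_eq']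
  have E1 : ∀ (j : Fin n) (B : Fin k),
      ∑ i, ∑ A, D (ev' k n j B) (ev' k n i A) * F (ev' k n i A)
        = ∑ A, ∑ i, x.2.2 i A * D (ev' k n j B) (ev' k n i A) := by
    intro j B
    have h := master (ev' k n j B)
    rw [hlv j B, hFsum, enDeriv_apply] at h
    simp only [show (ev' k n j B).2.2
        = (Pi.single j (Pi.single B (1:ℝ)) : Fin n → Fin k → ℝ) from rfl,
      Finset.sum_add_distrib, hsingle] at h
    simpa using h
  -- solve the linear system using invertibility of the Hessian
  set u : Fin n × Fin k → ℝ := fun q => F (ev' k n q.1 q.2) - x.2.2 q.1 q.2 with hudef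
  have hMu : M.mulVec u = 0 := by
    funext p
    simp only [Matrix.mulVec, dotProduct, Pi.zero_apply]
    rw [Fintype.sum_prod_type]
    have hE1 := E1 p.1 p.2
    simp only [hudef, hMdef, Matrix.of_apply, mul_sub]
    simp only [Finset.sum_sub_distrib]
    rw [hE1, sub_eq_zero]
    rw [Finset.sum_comm]
    exact Finset.sum_congr rfl fun A _ => Finset.sum_congr rfl fun i _ => mul_comm _ _
  have hu0 : u = 0 := by
    have hdet : IsUnit M.det := (Matrix.isUnit_iff_isUnit_det M).mp hMunit
    have hc := congrArg (fun v => Matrix.mulVec M⁻¹ v) hMu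
    simpa [Matrix.mulVec_mulVec, Matrix.nonsing_inv_mul M hdet, Matrix.mulVec_zero] using hc
  have part1 : ∀ i A, F (ev' k n i A) = x.2.2 i A := by
    intro i A
    have := congrFun hu0 (i, A)
    simpa [hudef, sub_eq_zero] using this
  refine ⟨part1, ?_⟩
  intro i
  have h := master (eq' k n i)
  have hsplit : ℓ (eq' k n i)
      = eq' k n i + ((0, 0, fun j B => D (eq' k n i) (ev' k n j B)) : Vkn k n) := by
    rw [legDeriv_apply]
    refine Prod.ext ?_ (Prod.ext ?_ ?_) <;> simp [eq']
  rw [hsplit, map_add, hFsum] at h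
  rw [enDeriv_apply] at h
  simp only [show (eq' k n i).2.2 = (0 : Fin n → Fin k → ℝ) from rfl, Pi.zero_apply,
    mul_zero, add_zero] at h
  have hswap : ∑ j, ∑ B, D (eq' k n i) (ev' k n j B) * F (ev' k n j B)
      = ∑ A, ∑ j, x.2.2 j A * D (eq' k n i) (ev' k n j A) := by
    rw [Finset.sum_comm]
    refine Finset.sum_congr rfl fun A _ => Finset.sum_congr rfl fun j _ => ?_
    rw [part1 j A, mul_comm]
  rw [hswap] at h
  linarith
end Key


/-- For a hyperregular Lagrangian `L` with Hamiltonian `H = E_L ∘ Leg⁻¹`, a smooth field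
`φ : ℝ^k → ℝⁿ` satisfies the Euler–Lagrange field equations iff `ψ = Leg ∘ φ^{(1)}`
satisfies the Hamilton field equations. -/
theorem stmt_5 (k n : ℕ) (hk : 0 < k) (hn : 0 < n)
    (L : Vkn k n → ℝ) (hL : ContDiff ℝ (⊤ : ℕ∞) L)
    -- hyperregularity: `Leg` is a bijection and the Hessian is everywhere invertible
    (hbij : Function.Bijective (Leg k n L))
    (hreg : ∀ x : Vkn k n, IsUnit (Matrix.of fun p q : Fin n × Fin k =>
      pd2 k n L (ev' k n p.1 p.2) (ev' k n q.1 q.2) x))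
    -- `H = E_L ∘ Leg⁻¹`
    (H : Vkn k n → ℝ)
    (hHdef : ∀ p : Vkn k n, H p = energy k n L (Function.invFun (Leg k n L) p))
    (φ : (Fin k → ℝ) → (Fin n → ℝ)) (hφ : ContDiff ℝ (⊤ : ℕ∞) φ) :
    -- Euler–Lagrange field equations for `φ`
    (∀ (i : Fin n) (t : Fin k → ℝ),
      ∑ A, fderiv ℝ (fun s => fderiv ℝ L (prol k n φ s) (ev' k n i A)) t (Pi.single A 1)
        = fderiv ℝ L (prol k n φ t) (eq' k n i))
    ↔
    -- Hamilton field equations for `ψ = Leg ∘ φ^{(1)}`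
    ((∀ (A : Fin k) (i : Fin n) (t : Fin k → ℝ),
        fderiv ℝ (fun s => φ s i) t (Pi.single A 1)
          = fderiv ℝ H (Leg k n L (prol k n φ t)) (ev' k n i A))
      ∧ (∀ (i : Fin n) (t : Fin k → ℝ),
        ∑ A, fderiv ℝ (fun s => (Leg k n L (prol k n φ s)).2.2 i A) t (Pi.single A 1)
          = - fderiv ℝ H (Leg k n L (prol k n φ t)) (eq' k n i))) := by
  have key := fun x => key_lemma hL hbij hreg H hHdef x
  constructor
  · intro hEL
    refine ⟨?_, ?_⟩
    · intro A i t
      rw [(key (prol k n φ t)).1 i A]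
      rfl
    · intro i t
      rw [(key (prol k n φ t)).2 i, neg_neg]
      exact hEL i t
  · rintro ⟨h1, h2⟩ i t
    have h := h2 i t
    rw [(key (prol k n φ t)).2 i, neg_neg] at h
    exact h
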